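/- The set P(n) of clopen subsets of J_n, partially ordered by inclusion, is a lattice, with meet x ∧ y = int(x ∩ y) and join x ∨ y = cl(x ∪ y). -/

import Mathlib

/-- `J_n = {(i,j) : 1 ≤ i < j ≤ n}`. -/
def JnS (n : ℕ) : Set (ℕ × ℕ) := {p | 1 ≤ p.1 ∧ p.1 < p.2 ∧ p.2 ≤ n}

/-- Transitivity of a set of pairs, viewed as a binary relation. -/
def TransSet (x : Set (ℕ × ℕ)) : Prop := ∀ i j k : ℕ, (i, j) ∈ x → (j, k) ∈ x → (i, k) ∈ x

/-- A subset of `J_n` is closed if it is transitive. -/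
def ClosedIn (n : ℕ) (x : Set (ℕ × ℕ)) : Prop := x ⊆ JnS n ∧ TransSet x

/-- A subset of `J_n` is clopen if both it and its complement in `J_n` are closed. -/
def ClopenIn (n : ℕ) (x : Set (ℕ × ℕ)) : Prop := ClosedIn n x ∧ ClosedIn n (JnS n \ x)

/-- The transitive closure of a set of pairs. -/
def clS (x : Set (ℕ × ℕ)) : Set (ℕ × ℕ) :=
  {p | Relation.TransGen (fun a b => (a, b) ∈ x) p.1 p.2}

/-- The interior: the largest open subset of `x`, i.e. the complement in `J_n`
of the closure of the complement of `x`. -/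
def intS (n : ℕ) (x : Set (ℕ × ℕ)) : Set (ℕ × ℕ) := JnS n \ clS (JnS n \ x)

/-!
A subset `x ⊆ J_n` is open exactly when it *splits*: whenever `(i, k) ∈ x` and `i < j < k`,
one of `(i, j)`, `(j, k)` lies in `x`. Splitting passes from `x ∪ y` to its transitive
closure (split the first step of a chain from `i` to `k`, or recurse past `j`), so `cl (x ∪ y)`
is clopen and hence the join. Complementation in `J_n` is an order-reversing involution of
`P(n)` with `int (x ∩ y) = J_n \ cl ((J_n \ x) ∪ (J_n \ y))`, which turns joins into meets.
-/

lemma transSet_JnS (n : ℕ) : TransSet (JnS n) := by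
  rintro i j k ⟨hi, hij, -⟩ ⟨-, hjk, hk⟩
  exact ⟨hi, hij.trans hjk, hk⟩

lemma transSet_clS (x : Set (ℕ × ℕ)) : TransSet (clS x) :=
  fun _ _ _ => Relation.TransGen.trans

lemma subset_clS (x : Set (ℕ × ℕ)) : x ⊆ clS x :=
  fun _ h => Relation.TransGen.single h

lemma clS_subset {x s : Set (ℕ × ℕ)} (hxs : x ⊆ s) (hs : TransSet s) : clS x ⊆ s := by
  rintro ⟨a, b⟩ h
  change Relation.TransGen _ a b at h
  induction h with
  | single h => exact hxs h
  | tail _ h ih => exact hs _ _ _ ih (hxs h)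

lemma clopenIn_diff {n : ℕ} {x : Set (ℕ × ℕ)} (hx : ClopenIn n x) : ClopenIn n (JnS n \ x) :=
  ⟨hx.2, by rw [Set.sdiff_sdiff_cancel_left hx.1.1]; exact hx.1⟩

def Splits (n : ℕ) (x : Set (ℕ × ℕ)) : Prop :=
  ∀ i j k, (i, k) ∈ x → (i, j) ∈ JnS n → (j, k) ∈ JnS n → (i, j) ∈ x ∨ (j, k) ∈ x

lemma splits_iff_transSet_diff {n : ℕ} {x : Set (ℕ × ℕ)} :
    Splits n x ↔ TransSet (JnS n \ x) := by
  constructor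
  · rintro hx i j k ⟨hij, hijx⟩ ⟨hjk, hjkx⟩
    refine ⟨transSet_JnS n i j k hij hjk, fun hik => ?_⟩
    rcases hx i j k hik hij hjk with h | h
    exacts [hijx h, hjkx h]
  · intro hx i j k hik hij hjk
    by_contra! h
    exact (hx i j k ⟨hij, h.1⟩ ⟨hjk, h.2⟩).2 hik

lemma Splits.union {n : ℕ} {x y : Set (ℕ × ℕ)} (hx : Splits n x) (hy : Splits n y) :
    Splits n (x ∪ y) := by
  rintro i j k (hik | hik) hij hjk
  · exact (hx i j k hik hij hjk).imp Or.inl Or.inl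
  · exact (hy i j k hik hij hjk).imp Or.inr Or.inr

lemma Splits.clS {n : ℕ} {x : Set (ℕ × ℕ)} (hxJ : x ⊆ JnS n) (hx : Splits n x) :
    Splits n (clS x) := by
  intro i j k hik hij hjk
  change Relation.TransGen _ i k at hik
  induction hik using Relation.TransGen.head_induction_on generalizing j with
  | single h =>
    exact (hx _ j _ h hij hjk).imp Relation.TransGen.single Relation.TransGen.single
  | @head a c hac hck ih =>
    obtain ⟨ha, hac_lt, hc⟩ := hxJ hac
    rcases lt_trichotomy c j with hcj | rfl | hjc
    · exact (ih j ⟨(ha.trans_lt hac_lt).le, hcj, hij.2.2⟩ hjk).imp_left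
        (Relation.TransGen.head hac)
    · exact Or.inl (Relation.TransGen.single hac)
    · exact (hx a j c hac hij ⟨hjk.1, hjc, hc⟩).imp Relation.TransGen.single
        (fun hjcx => Relation.TransGen.head hjcx hck)

lemma clopenIn_iff {n : ℕ} {x : Set (ℕ × ℕ)} : ClopenIn n x ↔ ClosedIn n x ∧ Splits n x := by
  simp only [ClopenIn, ClosedIn, splits_iff_transSet_diff, Set.sdiff_subset, true_and]

lemma clopenIn_clS_union {n : ℕ} {x y : Set (ℕ × ℕ)} (hx : ClopenIn n x) (hy : ClopenIn n y) :
    ClopenIn n (clS (x ∪ y)) := by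
  have hxyJ : x ∪ y ⊆ JnS n := Set.union_subset hx.1.1 hy.1.1
  refine clopenIn_iff.2 ⟨⟨clS_subset hxyJ (transSet_JnS n), transSet_clS _⟩, ?_⟩
  exact ((clopenIn_iff.1 hx).2.union (clopenIn_iff.1 hy).2).clS hxyJ

lemma isLeast_clS_union {n : ℕ} {x y : Set (ℕ × ℕ)} (hx : ClopenIn n x) (hy : ClopenIn n y) :
    IsLeast {z | ClopenIn n z ∧ x ⊆ z ∧ y ⊆ z} (clS (x ∪ y)) :=
  ⟨⟨clopenIn_clS_union hx hy, Set.subset_union_left.trans (subset_clS _),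
      Set.subset_union_right.trans (subset_clS _)⟩,
    fun _ ⟨hz, hxz, hyz⟩ => clS_subset (Set.union_subset hxz hyz) hz.1.2⟩

lemma isGreatest_diff_of_isLeast {n : ℕ} {x y c : Set (ℕ × ℕ)} (hxJ : x ⊆ JnS n)
    (hyJ : y ⊆ JnS n) (hc : IsLeast {z | ClopenIn n z ∧ JnS n \ x ⊆ z ∧ JnS n \ y ⊆ z} c) :
    IsGreatest {z | ClopenIn n z ∧ z ⊆ x ∧ z ⊆ y} (JnS n \ c) := by
  obtain ⟨⟨hcc, hxc, hyc⟩, hleast⟩ := hc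
  refine ⟨⟨clopenIn_diff hcc, ?_, ?_⟩, ?_⟩
  · simpa only [Set.sdiff_sdiff_cancel_left hxJ] using Set.sdiff_subset_sdiff_right (s := JnS n) hxc
  · simpa only [Set.sdiff_sdiff_cancel_left hyJ] using Set.sdiff_subset_sdiff_right (s := JnS n) hyc
  · rintro z ⟨hz, hzx, hzy⟩ p hp
    have hcz : c ⊆ JnS n \ z := hleast ⟨clopenIn_diff hz, Set.sdiff_subset_sdiff_right hzx,
      Set.sdiff_subset_sdiff_right hzy⟩
    exact ⟨hz.1.1 hp, fun hpc => (hcz hpc).2 hp⟩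

/-- The permutohedron `P(n)` — clopen subsets of `J_n` ordered by inclusion — is a lattice,
with meet `x ∧ y = int (x ∩ y)` and join `x ∨ y = cl (x ∪ y)`: `int (x ∩ y)` is the greatest
clopen set below both `x` and `y`, and `cl (x ∪ y)` is the least clopen set above both. -/
theorem stmt2 (n : ℕ) (x y : Set (ℕ × ℕ)) (hx : ClopenIn n x) (hy : ClopenIn n y) :
    IsGreatest {z | ClopenIn n z ∧ z ⊆ x ∧ z ⊆ y} (intS n (x ∩ y)) ∧
    IsLeast {z | ClopenIn n z ∧ x ⊆ z ∧ y ⊆ z} (clS (x ∪ y)) := by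
  refine ⟨?_, isLeast_clS_union hx hy⟩
  rw [intS, Set.sdiff_inter]
  exact isGreatest_diff_of_isLeast hx.1.1 hy.1.1
    (isLeast_clS_union (clopenIn_diff hx) (clopenIn_diff hy))
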